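/- arXiv:1211.2389 — 2 statements merged into one kernel-verified Lean document; each statement's English description precedes it below -/
import Mathlib

section
/- Let n be a positive integer and let (X,d) be a finite ultrametric space with |X| = n and |Sp(X)| = n − 1. Then there exists ε > 0 such that every finite ultrametric space (Y,ρ) with |Y| ≤ n and Gromov–Hausdorff distance d_GH(X,Y) < ε satisfies |Y| = n and |Sp(Y)| = n − 1. -/
open Metric Set GromovHausdorff

lemma spec_finite {Y : Type*} [MetricSpace Y] (s : Finset Y) :
    ({r : ℝ | ∃ x ∈ s, ∃ y ∈ s, x ≠ y ∧ dist x y = r}).Finite := by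
  apply Set.Finite.subset (Set.finite_range (fun p : s × s => dist p.1.1 p.2.1))
  rintro r ⟨x, hx, y, hy, -, rfl⟩
  exact ⟨(⟨x, hx⟩, ⟨y, hy⟩), rfl⟩

lemma ultra_spec_bound {Y : Type*} [MetricSpace Y]
    (hu : ∀ x y z : Y, dist x y ≤ max (dist x z) (dist z y)) (s : Finset Y)
    (hs : s.Nonempty) :
    ({r : ℝ | ∃ x ∈ s, ∃ y ∈ s, x ≠ y ∧ dist x y = r}).ncard + 1 ≤ s.card := by
  induction s using Finset.strongInduction with
  | _ s ih =>
  by_cases hone : s.card ≤ 1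
  · have : ({r : ℝ | ∃ x ∈ s, ∃ y ∈ s, x ≠ y ∧ dist x y = r}) = ∅ := by
      ext r
      simp only [Set.mem_setOf_eq, Set.mem_empty_iff_false, iff_false]
      rintro ⟨x, hx, y, hy, hxy, -⟩
      exact hxy (Finset.card_le_one.mp hone x hx y hy)
    rw [this, Set.ncard_empty]
    have := Finset.card_pos.mpr hs
    omega
  · push_neg at hone
    obtain ⟨a₀, ha₀, b₀, hb₀, hab₀⟩ := Finset.one_lt_card.mp hone
    -- maximum distance
    have hne : (s ×ˢ s).Nonempty := hs.product hs
    set D := (s ×ˢ s).sup' hne (fun p => dist p.1 p.2) with hD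
    have hDle : ∀ x ∈ s, ∀ y ∈ s, dist x y ≤ D := fun x hx y hy =>
      Finset.le_sup' (f := fun p : Y × Y => dist p.1 p.2) (Finset.mk_mem_product hx hy)
    have hDpos : 0 < D := lt_of_lt_of_le (dist_pos.mpr hab₀) (hDle _ ha₀ _ hb₀)
    obtain ⟨⟨a, b⟩, hab_mem, habD⟩ := Finset.exists_mem_eq_sup' hne (fun p => dist p.1 p.2)
    rw [Finset.mem_product] at hab_mem
    obtain ⟨ha, hb⟩ := hab_mem
    have hdab : dist a b = D := habD.symm
    have hane : a ≠ b := by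
      intro h; rw [h, dist_self] at hdab; exact hDpos.ne hdab
    set t := s.filter (fun x => dist x a < D) with ht
    set u := s.filter (fun x => ¬ dist x a < D) with hu'
    have hat : a ∈ t := by
      simp [ht, ha, dist_self, hDpos]
    have hbu : b ∈ u := by
      simp [hu', hb, dist_comm b a, hdab]
    have htsub : t ⊂ s := by
      refine Finset.ssubset_iff_of_subset (Finset.filter_subset _ _) |>.mpr ⟨b, hb, ?_⟩
      simp [ht, dist_comm b a, hdab]
    have husub : u ⊂ s := by
      refine Finset.ssubset_iff_of_subset (Finset.filter_subset _ _) |>.mpr ⟨a, ha, ?_⟩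
      simp [hu', dist_self, hDpos]
    -- cross distances equal D
    have hcross : ∀ x ∈ t, ∀ y ∈ u, dist x y = D := by
      intro x hx y hy
      rw [ht, Finset.mem_filter] at hx
      rw [hu', Finset.mem_filter] at hy
      have hya : dist y a = D := le_antisymm (hDle _ hy.1 _ ha) (not_lt.mp hy.2)
      have h1 : dist x y ≤ D := hDle _ hx.1 _ hy.1
      have h2 : D ≤ dist x y := by
        have := hu y a x
        rw [hya] at this
        rcases max_cases (dist y x) (dist x a) with ⟨he, _⟩ | ⟨he, _⟩
        · rw [he] at this; rwa [dist_comm]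
        · rw [he] at this; exact absurd (lt_of_le_of_lt this hx.2) (lt_irrefl D)
      linarith
    -- spectrum splits
    have hsplit : ({r : ℝ | ∃ x ∈ s, ∃ y ∈ s, x ≠ y ∧ dist x y = r}) ⊆
        ({r : ℝ | ∃ x ∈ t, ∃ y ∈ t, x ≠ y ∧ dist x y = r}) ∪
        ({r : ℝ | ∃ x ∈ u, ∃ y ∈ u, x ≠ y ∧ dist x y = r}) ∪ {D} := by
      rintro r ⟨x, hx, y, hy, hxy, rfl⟩
      by_cases hxt : dist x a < D <;> by_cases hyt : dist y a < D
      · exact Or.inl <| Or.inl ⟨x, Finset.mem_filter.mpr ⟨hx, hxt⟩, y, Finset.mem_filter.mpr ⟨hy, hyt⟩, hxy, rfl⟩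
      · exact Or.inr <| hcross x (Finset.mem_filter.mpr ⟨hx, hxt⟩) y (Finset.mem_filter.mpr ⟨hy, hyt⟩)
      · refine Or.inr ?_
        rw [dist_comm]
        exact hcross y (Finset.mem_filter.mpr ⟨hy, hyt⟩) x (Finset.mem_filter.mpr ⟨hx, hxt⟩)
      · exact Or.inl <| Or.inr ⟨x, Finset.mem_filter.mpr ⟨hx, hxt⟩, y, Finset.mem_filter.mpr ⟨hy, hyt⟩, hxy, rfl⟩
    have hcount : ({r : ℝ | ∃ x ∈ s, ∃ y ∈ s, x ≠ y ∧ dist x y = r}).ncard ≤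
        ({r : ℝ | ∃ x ∈ t, ∃ y ∈ t, x ≠ y ∧ dist x y = r}).ncard +
        ({r : ℝ | ∃ x ∈ u, ∃ y ∈ u, x ≠ y ∧ dist x y = r}).ncard + 1 := by
      calc _ ≤ (({r : ℝ | ∃ x ∈ t, ∃ y ∈ t, x ≠ y ∧ dist x y = r}) ∪
          ({r : ℝ | ∃ x ∈ u, ∃ y ∈ u, x ≠ y ∧ dist x y = r}) ∪ {D}).ncard :=
            Set.ncard_le_ncard hsplit
              (((spec_finite t).union (spec_finite u)).union (Set.finite_singleton D))
        _ ≤ (({r : ℝ | ∃ x ∈ t, ∃ y ∈ t, x ≠ y ∧ dist x y = r}) ∪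
          ({r : ℝ | ∃ x ∈ u, ∃ y ∈ u, x ≠ y ∧ dist x y = r})).ncard + ({D} : Set ℝ).ncard :=
            Set.ncard_union_le _ _
        _ ≤ _ := by
            have := Set.ncard_union_le ({r : ℝ | ∃ x ∈ t, ∃ y ∈ t, x ≠ y ∧ dist x y = r})
              ({r : ℝ | ∃ x ∈ u, ∃ y ∈ u, x ≠ y ∧ dist x y = r})
            simp only [Set.ncard_singleton]
            omega
    have iht := ih t htsub ⟨a, hat⟩
    have ihu := ih u husub ⟨b, hbu⟩
    have hcards : t.card + u.card = s.card := Finset.card_filter_add_card_filter_not _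
    omega

/-- Let `n ≥ 1` and let `(X,d)` be a finite ultrametric space with
`|X| = n` and `|Sp(X)| = n − 1`. Then there is `ε > 0` such that every finite
ultrametric space `(Y,ρ)` with `|Y| ≤ n` and `d_GH(X,Y) < ε` satisfies `|Y| = n`
and `|Sp(Y)| = n − 1`. -/
theorem stmt16 {X : Type u} [MetricSpace X] [Fintype X] [Nonempty X]
    (hultra : ∀ x y z : X, dist x y ≤ max (dist x z) (dist z y))
    (n : ℕ) (hn : 1 ≤ n) (hcard : Fintype.card X = n)
    (hspec : ({r : ℝ | ∃ x y : X, x ≠ y ∧ dist x y = r}).ncard = n - 1) :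
    ∃ ε : ℝ, 0 < ε ∧
      ∀ (Y : Type v) (_ : MetricSpace Y) (_ : Fintype Y) (_ : Nonempty Y),
        (∀ x y z : Y, dist x y ≤ max (dist x z) (dist z y)) →
        Fintype.card Y ≤ n →
        GromovHausdorff.ghDist X Y < ε →
        Fintype.card Y = n ∧
          ({r : ℝ | ∃ x y : Y, x ≠ y ∧ dist x y = r}).ncard = n - 1 := by
  classical
  rcases eq_or_lt_of_le hn with h1 | h2
  · -- n = 1
    refine ⟨1, one_pos, fun Y _ _ _ _ hcardY _ => ?_⟩
    have hY1 : Fintype.card Y = 1 := le_antisymm (h1 ▸ hcardY) Fintype.card_pos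
    have hsub : Subsingleton Y := Fintype.card_le_one_iff_subsingleton.mp hY1.le
    constructor
    · omega
    · have : ({r : ℝ | ∃ x y : Y, x ≠ y ∧ dist x y = r}) = ∅ := by
        ext r
        simp only [Set.mem_setOf_eq, Set.mem_empty_iff_false, iff_false]
        rintro ⟨x, y, hxy, -⟩
        exact hxy (Subsingleton.elim x y)
      rw [this, Set.ncard_empty]
      omega
  · -- n ≥ 2
    set S0 : Finset ℝ := Finset.image (fun p : X × X => dist p.1 p.2) Finset.univ with hS0
    have hmemS0 : ∀ x y : X, dist x y ∈ S0 := fun x y =>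
      Finset.mem_image.mpr ⟨(x, y), Finset.mem_univ _, rfl⟩
    set T : Finset (ℝ × ℝ) := (S0 ×ˢ S0).filter (fun p => p.1 ≠ p.2) with hT
    have hTne : T.Nonempty := by
      obtain ⟨a, b, hab⟩ := Fintype.exists_pair_of_one_lt_card (hcard ▸ h2)
      refine ⟨(0, dist a b), Finset.mem_filter.mpr ⟨Finset.mk_mem_product ?_ (hmemS0 a b), ?_⟩⟩
      · simpa using hmemS0 a a
      · simp [Ne, eq_comm, dist_eq_zero, hab]
    set sep : ℝ := T.inf' hTne (fun p => |p.1 - p.2|) with hsep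
    have hseppos : 0 < sep := by
      rw [hsep, Finset.lt_inf'_iff]
      rintro ⟨v, w⟩ hvw
      rw [hT, Finset.mem_filter] at hvw
      exact abs_pos.mpr (sub_ne_zero.mpr hvw.2)
    have hsep_le : ∀ v ∈ S0, ∀ w ∈ S0, v ≠ w → sep ≤ |v - w| := by
      intro v hv w hw hvw
      exact Finset.inf'_le _ (Finset.mem_filter.mpr ⟨Finset.mk_mem_product hv hw, hvw⟩)
    refine ⟨sep / 4, by linarith, fun Y _ _ _ hultraY hcardY hGH => ?_⟩
    -- the optimal coupling
    set Φ := optimalGHInjl X Y with hΦ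
    set Ψ := optimalGHInjr X Y with hΨ
    have hΦi : Isometry Φ := isometry_optimalGHInjl X Y
    have hΨi : Isometry Ψ := isometry_optimalGHInjr X Y
    have hHlt : hausdorffDist (range Φ) (range Ψ) < sep / 4 := by
      rw [hΦ, hΨ, hausdorffDist_optimal]; exact hGH
    have hedist : EMetric.hausdorffEdist (range Φ) (range Ψ) ≠ ⊤ :=
      hausdorffEdist_ne_top_of_nonempty_of_bounded (range_nonempty _) (range_nonempty _)
        (Set.finite_range _).isBounded (Set.finite_range _).isBounded
    have hex : ∀ x : X, ∃ y : Y, dist (Φ x) (Ψ y) < sep / 4 := by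
      intro x
      obtain ⟨z, hz, hd⟩ := exists_dist_lt_of_hausdorffDist_lt (mem_range_self x) hHlt hedist
      obtain ⟨y, rfl⟩ := hz
      exact ⟨y, hd⟩
    choose f hf using hex
    -- distortion bound
    have hdistort : ∀ x x' : X, |dist x x' - dist (f x) (f x')| < sep / 2 := by
      intro x x'
      have h1 := dist_dist_dist_le (Φ x) (Φ x') (Ψ (f x)) (Ψ (f x'))
      rw [hΦi.dist_eq, hΨi.dist_eq, Real.dist_eq] at h1
      have := hf x
      have := hf x'
      linarith [h1]
    -- f is injective
    have hfinj : Function.Injective f := by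
      intro x x' hxx
      by_contra hne
      have h0 : dist x x' ∈ S0 := hmemS0 x x'
      have h00 : (0 : ℝ) ∈ S0 := by simpa using hmemS0 x x
      have hge : sep ≤ |dist x x' - 0| :=
        hsep_le _ h0 _ h00 (by simp [dist_eq_zero, hne])
      have := hdistort x x'
      rw [hxx, dist_self, sub_zero] at this
      rw [sub_zero] at hge
      linarith
    have hcardeq : Fintype.card Y = n := by
      have := Fintype.card_le_of_injective f hfinj
      omega
    refine ⟨hcardeq, ?_⟩
    -- spectra
    set SpX := {r : ℝ | ∃ x y : X, x ≠ y ∧ dist x y = r} with hSpX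
    set SpY := {r : ℝ | ∃ x y : Y, x ≠ y ∧ dist x y = r} with hSpY
    have hSpYfin : SpY.Finite := by
      have := spec_finite (Finset.univ : Finset Y)
      convert this using 2
      ext r; simp [hSpY]
    -- choose witnesses for each spectrum value of X
    have hwit : ∀ r ∈ SpX, ∃ p : X × X, p.1 ≠ p.2 ∧ dist p.1 p.2 = r := by
      rintro r ⟨x, y, hxy, hd⟩; exact ⟨(x, y), hxy, hd⟩
    choose w hw1 hw2 using hwit
    set F : ℝ → ℝ := fun r => if h : r ∈ SpX then dist (f (w r h).1) (f (w r h).2) else 0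
      with hF
    have hFmem : ∀ r ∈ SpX, F r ∈ SpY := by
      intro r hr
      rw [hF]
      simp only [dif_pos hr]
      exact ⟨f (w r hr).1, f (w r hr).2, fun h => hw1 r hr (hfinj h), rfl⟩
    have hFclose : ∀ r (hr : r ∈ SpX), |r - F r| < sep / 2 := by
      intro r hr
      rw [hF]
      simp only [dif_pos hr]
      have := hdistort (w r hr).1 (w r hr).2
      rw [hw2 r hr] at this
      exact this
    have hFinj : Set.InjOn F SpX := by
      intro r hr r' hr' heq
      by_contra hne
      have hrS0 : r ∈ S0 := by rw [← hw2 r hr]; exact hmemS0 _ _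
      have hrS0' : r' ∈ S0 := by rw [← hw2 r' hr']; exact hmemS0 _ _
      have h3 : sep ≤ |r - r'| := hsep_le _ hrS0 _ hrS0' hne
      have h1 := hFclose r hr
      have h2 := hFclose r' hr'
      have h4 : |r - r'| ≤ |r - F r| + |F r - r'| := abs_sub_le r (F r) r'
      have h5 : |F r - r'| = |r' - F r'| := by rw [heq, abs_sub_comm]
      linarith
    have hlower : SpX.ncard ≤ SpY.ncard :=
      Set.ncard_le_ncard_of_injOn F hFmem hFinj hSpYfin
    have hupper : SpY.ncard + 1 ≤ Fintype.card Y := by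
      have hb := ultra_spec_bound hultraY (Finset.univ : Finset Y) Finset.univ_nonempty
      have : ({r : ℝ | ∃ x ∈ (Finset.univ : Finset Y), ∃ y ∈ (Finset.univ : Finset Y),
          x ≠ y ∧ dist x y = r}) = SpY := by
        ext r; simp [hSpY]
      rwa [this, Finset.card_univ] at hb
    rw [hSpX, hspec] at hlower
    omega
end

section
/- Let n be a positive integer, let ε > 0, and let (Y,ρ) be a finite nonempty ultrametric space with |Y| ≤ n. Then there exists a finite ultrametric space (X,d) with |X| = n, |Sp(X)| = n − 1, and Gromov–Hausdorff distance d_GH(X,Y) < ε. -/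
open Finset in
theorem splitAux {T : Type} : ∀ (k : ℕ) (s : Finset T), s.card = k →
    ∀ (d : T → T → ℝ),
      (∀ x ∈ s, ∀ y ∈ s, d x y = d y x) →
      (∀ x ∈ s, d x x = 0) →
      (∀ x ∈ s, ∀ y ∈ s, x ≠ y → 0 < d x y) →
      (∀ x ∈ s, ∀ y ∈ s, ∀ z ∈ s, d x y ≤ max (d x z) (d z y)) →
    ∀ δ : ℝ, 0 < δ → ∀ F : Set ℝ, F.Finite →
    ∃ d' : T → T → ℝ,
      (∀ x ∈ s, ∀ y ∈ s, d' x y = d' y x) ∧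
      (∀ x ∈ s, d' x x = 0) ∧
      (∀ x ∈ s, ∀ y ∈ s, ∀ z ∈ s, d' x y ≤ max (d' x z) (d' z y)) ∧
      (∀ x ∈ s, ∀ y ∈ s, x ≠ y → d x y ≤ d' x y ∧ d' x y ≤ d x y + δ) ∧
      {r : ℝ | ∃ x ∈ s, ∃ y ∈ s, x ≠ y ∧ d' x y = r}.ncard = k - 1 ∧
      {r : ℝ | ∃ x ∈ s, ∃ y ∈ s, x ≠ y ∧ d' x y = r} ∩ F = ∅ := by
  intro k
  induction k using Nat.strong_induction_on with
  | _ k IH =>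
  intro s hcard d hsymm hdiag hpos hultra δ hδ F hF
  classical
  by_cases hk2 : k ≤ 1
  · -- trivial case: at most one point, spectrum empty
    refine ⟨d, hsymm, hdiag, hultra, fun x hx y hy hxy => ⟨le_refl _, by linarith⟩, ?_, ?_⟩
    all_goals {
      have he : {r : ℝ | ∃ x ∈ s, ∃ y ∈ s, x ≠ y ∧ d x y = r} = ∅ := by
        ext r
        simp only [Set.mem_setOf_eq, Set.mem_empty_iff_false, iff_false, not_exists]
        rintro x ⟨hx, y, hy, hxy, _⟩
        exact hxy (Finset.card_le_one.mp (hcard ▸ hk2) x hx y hy)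
      rw [he]
      simp only [Set.ncard_empty, Set.empty_inter]
      try omega }
  · -- main case: k ≥ 2
    push_neg at hk2
    have hsne : s.Nonempty := Finset.card_pos.mp (by omega)
    obtain ⟨x₀, hx₀⟩ := hsne
    have hpne : (s ×ˢ s).Nonempty := ⟨(x₀, x₀), Finset.mem_product.mpr ⟨hx₀, hx₀⟩⟩
    set M := (s ×ˢ s).sup' hpne (fun p => d p.1 p.2) with hMdef
    have hMle : ∀ x ∈ s, ∀ y ∈ s, d x y ≤ M := fun x hx y hy =>
      Finset.le_sup' (f := fun p : T × T => d p.1 p.2) (b := (x, y)) (Finset.mem_product.mpr ⟨hx, hy⟩)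
    obtain ⟨p, hpmem, hpeq⟩ := Finset.exists_mem_eq_sup' hpne (fun p => d p.1 p.2)
    obtain ⟨hu, hv⟩ := Finset.mem_product.mp hpmem
    obtain ⟨a, ha, b, hb, hab⟩ := Finset.one_lt_card.mp (show 1 < s.card by omega)
    have hMpos : 0 < M := lt_of_lt_of_le (hpos a ha b hb hab) (hMle a ha b hb)
    set A := s.filter (fun y => d x₀ y < M) with hAdef
    set B := s.filter (fun y => ¬ d x₀ y < M) with hBdef
    have hAsub : A ⊆ s := Finset.filter_subset _ _
    have hBsub : B ⊆ s := Finset.filter_subset _ _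
    have hAB : ∀ x ∈ s, x ∈ A ∨ x ∈ B := by
      intro x hx
      by_cases h : d x₀ x < M
      · exact Or.inl (Finset.mem_filter.mpr ⟨hx, h⟩)
      · exact Or.inr (Finset.mem_filter.mpr ⟨hx, h⟩)
    have hnotboth : ∀ x, x ∈ A → x ∈ B → False := fun x h1 h2 =>
      (Finset.mem_filter.mp h2).2 (Finset.mem_filter.mp h1).2
    have hx₀A : x₀ ∈ A := Finset.mem_filter.mpr ⟨hx₀, by rw [hdiag x₀ hx₀]; exact hMpos⟩
    have hBeq : ∀ y ∈ B, d x₀ y = M := fun y hy =>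
      le_antisymm (hMle x₀ hx₀ y (hBsub hy)) (not_lt.mp (Finset.mem_filter.mp hy).2)
    have hBne : B.Nonempty := by
      by_contra h
      rw [Finset.not_nonempty_iff_eq_empty] at h
      have hallA : ∀ x ∈ s, d x₀ x < M := by
        intro x hx
        rcases hAB x hx with h1 | h1
        · exact (Finset.mem_filter.mp h1).2
        · rw [h] at h1; exact absurd h1 (Finset.notMem_empty x)
      have h1 := hultra p.1 hu p.2 hv x₀ hx₀
      rw [← hpeq] at h1
      have h2 : d p.1 x₀ < M := by rw [hsymm p.1 hu x₀ hx₀]; exact hallA p.1 hu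
      have h3 : d x₀ p.2 < M := hallA p.2 hv
      rcases max_cases (d p.1 x₀) (d x₀ p.2) with ⟨he, _⟩ | ⟨he, _⟩ <;> rw [he] at h1 <;> linarith
    have hcross : ∀ a ∈ A, ∀ b ∈ B, d a b = M := by
      intro a haA b hbB
      have haS := hAsub haA; have hbS := hBsub hbB
      have h1 : d a b ≤ M := hMle a haS b hbS
      have h3 := hultra x₀ hx₀ b hbS a haS
      rw [hBeq b hbB] at h3
      have h4 : d x₀ a < M := (Finset.mem_filter.mp haA).2
      rcases max_cases (d x₀ a) (d a b) with ⟨he, _⟩ | ⟨he, _⟩ <;> rw [he] at h3 <;> linarith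
    have hAne : A.Nonempty := ⟨x₀, hx₀A⟩
    obtain ⟨b₀, hb₀⟩ := hBne
    have hApne : (A ×ˢ A).Nonempty := ⟨(x₀, x₀), Finset.mem_product.mpr ⟨hx₀A, hx₀A⟩⟩
    have hBpne : (B ×ˢ B).Nonempty := ⟨(b₀, b₀), Finset.mem_product.mpr ⟨hb₀, hb₀⟩⟩
    set dA := (A ×ˢ A).sup' hApne (fun p => d p.1 p.2) with hdAdef
    have hdAltM : dA < M := by
      rw [hdAdef, Finset.sup'_lt_iff]
      rintro ⟨x, y⟩ hxy
      obtain ⟨hxA, hyA⟩ := Finset.mem_product.mp hxy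
      have h1 := hultra x (hAsub hxA) y (hAsub hyA) x₀ hx₀
      have h2 : d x x₀ < M := by
        rw [hsymm x (hAsub hxA) x₀ hx₀]; exact (Finset.mem_filter.mp hxA).2
      have h3 : d x₀ y < M := (Finset.mem_filter.mp hyA).2
      rcases max_cases (d x x₀) (d x₀ y) with ⟨he, _⟩ | ⟨he, _⟩ <;> rw [he] at h1 <;>
        simp only <;> linarith
    have hcardAB : A.card + B.card = k := by
      rw [hAdef, hBdef, Finset.card_filter_add_card_filter_not, hcard]
    have hcardA1 : 1 ≤ A.card := Finset.card_pos.mpr hAne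
    have hcardB1 : 1 ≤ B.card := Finset.card_pos.mpr ⟨b₀, hb₀⟩
    obtain ⟨dB', hBsymm', hBdiag', hBultra', hBbound', hBcount', hBavoid'⟩ :=
      IH B.card (by omega) B rfl d
        (fun x hx y hy => hsymm x (hBsub hx) y (hBsub hy))
        (fun x hx => hdiag x (hBsub hx))
        (fun x hx y hy hxy => hpos x (hBsub hx) y (hBsub hy) hxy)
        (fun x hx y hy z hz => hultra x (hBsub hx) y (hBsub hy) z (hBsub hz))
        (δ/2) (by linarith) F hF
    set SpB := {r : ℝ | ∃ x ∈ B, ∃ y ∈ B, x ≠ y ∧ dB' x y = r} with hSpBdef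
    have hSpBfin : SpB.Finite := by
      apply Set.Finite.subset (((B ×ˢ B).image (fun p => dB' p.1 p.2)).finite_toSet)
      rintro r ⟨x, hx, y, hy, _, hr⟩
      simp only [Finset.coe_image, Set.mem_image, Finset.mem_coe, Finset.mem_product]
      exact ⟨(x, y), ⟨hx, hy⟩, hr⟩
    set δA := min (δ/2) ((M - dA)/2) with hδAdef
    have hδApos : 0 < δA := lt_min (by linarith) (by linarith)
    obtain ⟨dA', hAsymm', hAdiag', hAultra', hAbound', hAcount', hAavoid'⟩ :=
      IH A.card (by omega) A rfl d
        (fun x hx y hy => hsymm x (hAsub hx) y (hAsub hy))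
        (fun x hx => hdiag x (hAsub hx))
        (fun x hx y hy hxy => hpos x (hAsub hx) y (hAsub hy) hxy)
        (fun x hx y hy z hz => hultra x (hAsub hx) y (hAsub hy) z (hAsub hz))
        δA hδApos (F ∪ SpB) (hF.union hSpBfin)
    set SpA := {r : ℝ | ∃ x ∈ A, ∃ y ∈ A, x ≠ y ∧ dA' x y = r} with hSpAdef
    have hSpAfin : SpA.Finite := by
      apply Set.Finite.subset (((A ×ˢ A).image (fun p => dA' p.1 p.2)).finite_toSet)
      rintro r ⟨x, hx, y, hy, _, hr⟩
      simp only [Finset.coe_image, Set.mem_image, Finset.mem_coe, Finset.mem_product]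
      exact ⟨(x, y), ⟨hx, hy⟩, hr⟩
    set sB := (B ×ˢ B).sup' hBpne (fun p => dB' p.1 p.2) with hsBdef
    have hdB'le : ∀ x ∈ B, ∀ y ∈ B, dB' x y ≤ sB := fun x hx y hy =>
      Finset.le_sup' (f := fun p : T × T => dB' p.1 p.2) (b := (x, y)) (Finset.mem_product.mpr ⟨hx, hy⟩)
    have hsBle : sB ≤ M + δ/2 := by
      rw [hsBdef]
      apply Finset.sup'_le
      rintro ⟨x, y⟩ hxy
      obtain ⟨hx, hy⟩ := Finset.mem_product.mp hxy
      by_cases hxyeq : x = y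
      · subst hxyeq; simp only; rw [hBdiag' x hx]; linarith
      · have h1 := (hBbound' x hx y hy hxyeq).2
        have h2 := hMle x (hBsub hx) y (hBsub hy)
        simp only
        linarith
    set sA := (A ×ˢ A).sup' hApne (fun p => dA' p.1 p.2) with hsAdef
    have hdA'le : ∀ x ∈ A, ∀ y ∈ A, dA' x y ≤ sA := fun x hx y hy =>
      Finset.le_sup' (f := fun p : T × T => dA' p.1 p.2) (b := (x, y)) (Finset.mem_product.mpr ⟨hx, hy⟩)
    have hsAltM : sA < M := by
      rw [hsAdef, Finset.sup'_lt_iff]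
      rintro ⟨x, y⟩ hxy
      obtain ⟨hx, hy⟩ := Finset.mem_product.mp hxy
      by_cases hxyeq : x = y
      · subst hxyeq; simp only; rw [hAdiag' x hx]; linarith
      · have h1 := (hAbound' x hx y hy hxyeq).2
        have h2 : d x y ≤ dA :=
          Finset.le_sup' (f := fun p : T × T => d p.1 p.2) (b := (x, y)) (Finset.mem_product.mpr ⟨hx, hy⟩)
        have h3 : δA ≤ (M - dA)/2 := min_le_right _ _
        simp only
        linarith
    have hLlt : max M sB < M + δ := by
      rcases max_cases M sB with ⟨he, _⟩ | ⟨he, _⟩ <;> rw [he] <;> linarith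
    obtain ⟨M', hM'⟩ := ((Set.Ioo_infinite hLlt).diff hF).nonempty
    obtain ⟨⟨hM'lo, hM'hi⟩, hM'F⟩ := hM'
    have hMltM' : M < M' := lt_of_le_of_lt (le_max_left _ _) hM'lo
    have hsBltM' : sB < M' := lt_of_le_of_lt (le_max_right _ _) hM'lo
    set d' : T → T → ℝ := fun x y =>
      if x ∈ A ∧ y ∈ A then dA' x y else if x ∈ B ∧ y ∈ B then dB' x y else M' with hd'def
    have hd'AA : ∀ x ∈ A, ∀ y ∈ A, d' x y = dA' x y := by
      intro x hx y hy
      simp only [hd'def]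
      rw [if_pos ⟨hx, hy⟩]
    have hd'BB : ∀ x ∈ B, ∀ y ∈ B, d' x y = dB' x y := by
      intro x hx y hy
      simp only [hd'def]
      rw [if_neg (fun h => hnotboth x h.1 hx), if_pos ⟨hx, hy⟩]
    have hd'AB : ∀ x ∈ A, ∀ y ∈ B, d' x y = M' := by
      intro x hx y hy
      simp only [hd'def]
      rw [if_neg (fun h => hnotboth y h.2 hy), if_neg (fun h => hnotboth x hx h.1)]
    have hd'BA : ∀ x ∈ B, ∀ y ∈ A, d' x y = M' := by
      intro x hx y hy
      simp only [hd'def]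
      rw [if_neg (fun h => hnotboth x h.1 hx), if_neg (fun h => hnotboth y hy h.2)]
    have hSpA_lt : ∀ r ∈ SpA, r < M' := by
      rintro r ⟨x, hx, y, hy, hxy, rfl⟩
      have := hdA'le x hx y hy
      linarith
    have hSpB_lt : ∀ r ∈ SpB, r < M' := by
      rintro r ⟨x, hx, y, hy, hxy, rfl⟩
      have := hdB'le x hx y hy
      linarith
    have hSpEq : {r : ℝ | ∃ x ∈ s, ∃ y ∈ s, x ≠ y ∧ d' x y = r} = (SpA ∪ SpB) ∪ {M'} := by
      ext r
      simp only [Set.mem_union, Set.mem_singleton_iff, hSpAdef, hSpBdef, Set.mem_setOf_eq]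
      constructor
      · rintro ⟨x, hx, y, hy, hxy, hr⟩
        rcases hAB x hx with hxA | hxB <;> rcases hAB y hy with hyA | hyB
        · exact Or.inl (Or.inl ⟨x, hxA, y, hyA, hxy, by rw [← hd'AA x hxA y hyA]; exact hr⟩)
        · exact Or.inr (by rw [← hr, hd'AB x hxA y hyB])
        · exact Or.inr (by rw [← hr, hd'BA x hxB y hyA])
        · exact Or.inl (Or.inr ⟨x, hxB, y, hyB, hxy, by rw [← hd'BB x hxB y hyB]; exact hr⟩)
      · rintro ((⟨x, hx, y, hy, hxy, hr⟩ | ⟨x, hx, y, hy, hxy, hr⟩) | rfl)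
        · exact ⟨x, hAsub hx, y, hAsub hy, hxy, by rw [hd'AA x hx y hy]; exact hr⟩
        · exact ⟨x, hBsub hx, y, hBsub hy, hxy, by rw [hd'BB x hx y hy]; exact hr⟩
        · exact ⟨x₀, hx₀, b₀, hBsub hb₀, fun h => hnotboth x₀ hx₀A (h ▸ hb₀), hd'AB x₀ hx₀A b₀ hb₀⟩
    refine ⟨d', ?_, ?_, ?_, ?_, ?_, ?_⟩
    · intro x hx y hy
      rcases hAB x hx with hxA | hxB <;> rcases hAB y hy with hyA | hyB
      · rw [hd'AA x hxA y hyA, hd'AA y hyA x hxA]; exact hAsymm' x hxA y hyA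
      · rw [hd'AB x hxA y hyB, hd'BA y hyB x hxA]
      · rw [hd'BA x hxB y hyA, hd'AB y hyA x hxB]
      · rw [hd'BB x hxB y hyB, hd'BB y hyB x hxB]; exact hBsymm' x hxB y hyB
    · intro x hx
      rcases hAB x hx with hxA | hxB
      · rw [hd'AA x hxA x hxA]; exact hAdiag' x hxA
      · rw [hd'BB x hxB x hxB]; exact hBdiag' x hxB
    · intro x hx y hy z hz
      rcases hAB x hx with hxA | hxB <;> rcases hAB y hy with hyA | hyB <;>
        rcases hAB z hz with hzA | hzB
      · rw [hd'AA x hxA y hyA, hd'AA x hxA z hzA, hd'AA z hzA y hyA]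
        exact hAultra' x hxA y hyA z hzA
      · rw [hd'AA x hxA y hyA, hd'AB x hxA z hzB, hd'BA z hzB y hyA]
        have h1 := hdA'le x hxA y hyA
        simp only [max_self]
        linarith
      · rw [hd'AB x hxA y hyB, hd'AB z hzA y hyB]
        exact le_max_right _ _
      · rw [hd'AB x hxA y hyB, hd'AB x hxA z hzB]
        exact le_max_left _ _
      · rw [hd'BA x hxB y hyA, hd'BA x hxB z hzA]
        exact le_max_left _ _
      · rw [hd'BA x hxB y hyA, hd'BA z hzB y hyA]
        exact le_max_right _ _
      · rw [hd'BB x hxB y hyB, hd'BA x hxB z hzA, hd'AB z hzA y hyB]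
        have h1 := hdB'le x hxB y hyB
        simp only [max_self]
        linarith
      · rw [hd'BB x hxB y hyB, hd'BB x hxB z hzB, hd'BB z hzB y hyB]
        exact hBultra' x hxB y hyB z hzB
    · intro x hx y hy hxy
      rcases hAB x hx with hxA | hxB <;> rcases hAB y hy with hyA | hyB
      · rw [hd'AA x hxA y hyA]
        have h := hAbound' x hxA y hyA hxy
        have h2 : δA ≤ δ/2 := min_le_left _ _
        exact ⟨h.1, by linarith [h.2]⟩
      · rw [hd'AB x hxA y hyB, hcross x hxA y hyB]
        exact ⟨le_of_lt hMltM', le_of_lt hM'hi⟩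
      · rw [hd'BA x hxB y hyA, hsymm x hx y hy, hcross y hyA x hxB]
        exact ⟨le_of_lt hMltM', le_of_lt hM'hi⟩
      · rw [hd'BB x hxB y hyB]
        have h := hBbound' x hxB y hyB hxy
        exact ⟨h.1, by linarith [h.2]⟩
    · rw [hSpEq]
      have hdisjAB : Disjoint SpA SpB := by
        rw [Set.disjoint_left]
        intro r hrA hrB
        have hmem : r ∈ SpA ∩ (F ∪ SpB) := ⟨hrA, Or.inr hrB⟩
        rw [hAavoid'] at hmem
        exact absurd hmem (Set.notMem_empty r)
      have hdisjM : Disjoint (SpA ∪ SpB) {M'} := by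
        rw [Set.disjoint_right]
        intro r hr
        rw [Set.mem_singleton_iff] at hr
        subst hr
        rintro (h | h)
        · exact absurd (hSpA_lt _ h) (lt_irrefl _)
        · exact absurd (hSpB_lt _ h) (lt_irrefl _)
      rw [Set.ncard_union_eq hdisjM (hSpAfin.union hSpBfin) (Set.finite_singleton _),
          Set.ncard_union_eq hdisjAB hSpAfin hSpBfin, hAcount', hBcount', Set.ncard_singleton]
      omega
    · rw [hSpEq]
      apply Set.eq_empty_iff_forall_notMem.mpr
      rintro r ⟨hmem, hrF⟩
      rcases hmem with (h | h) | h
      · have hm2 : r ∈ SpA ∩ (F ∪ SpB) := ⟨h, Or.inl hrF⟩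
        rw [hAavoid'] at hm2
        exact absurd hm2 (Set.notMem_empty r)
      · have hm2 : r ∈ SpB ∩ F := ⟨h, hrF⟩
        rw [hBavoid'] at hm2
        exact absurd hm2 (Set.notMem_empty r)
      · rw [Set.mem_singleton_iff] at h
        subst h
        exact hM'F hrF

/-- Let `n ≥ 1`, `ε > 0`, and let `(Y,ρ)` be a finite nonempty
ultrametric space with `|Y| ≤ n`. Then there is a finite ultrametric space `(X,d)`
with `|X| = n`, `|Sp(X)| = n − 1`, and `d_GH(X,Y) < ε`. -/
theorem stmt17 {Y : Type u} [MetricSpace Y] [Fintype Y] [Nonempty Y]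
    (hultra : ∀ x y z : Y, dist x y ≤ max (dist x z) (dist z y))
    (n : ℕ) (hn : 1 ≤ n) (hcard : Fintype.card Y ≤ n)
    (ε : ℝ) (hε : 0 < ε) :
    ∃ (X : Type) (_ : MetricSpace X) (_ : Fintype X) (_ : Nonempty X),
      (∀ x y z : X, dist x y ≤ max (dist x z) (dist z y)) ∧
      Fintype.card X = n ∧
      ({r : ℝ | ∃ x y : X, x ≠ y ∧ dist x y = r}).ncard = n - 1 ∧
      GromovHausdorff.ghDist X Y < ε := by
  classical
  set m := Fintype.card Y with hm
  have hm1 : 1 ≤ m := Fintype.card_pos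
  set e := (Fintype.equivFin Y).symm with he
  set π : Fin n → Y := fun i => e ⟨min i.val (m - 1), by omega⟩ with hπ
  have hπsurj : Function.Surjective π := by
    intro y
    have hv : (e.symm y).val < m := (e.symm y).isLt
    refine ⟨⟨(e.symm y).val, by omega⟩, ?_⟩
    have h1 : min (e.symm y).val (m - 1) = (e.symm y).val := by omega
    simp only [hπ]
    rw [show (⟨min (e.symm y).val (m - 1), by omega⟩ : Fin m) = e.symm y from Fin.ext h1]
    exact e.apply_symm_apply y
  set η := ε / 8 with hη
  have hηpos : 0 < η := by rw [hη]; linarith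
  set d₀ : Fin n → Fin n → ℝ := fun i j =>
    if i = j then 0 else max (dist (π i) (π j)) η with hd₀
  have hd₀diag : ∀ i, d₀ i i = 0 := fun i => if_pos rfl
  have hd₀off : ∀ i j, i ≠ j → d₀ i j = max (dist (π i) (π j)) η := fun i j h => if_neg h
  have hd₀symm : ∀ i j, d₀ i j = d₀ j i := by
    intro i j
    by_cases h : i = j
    · subst h; rfl
    · rw [hd₀off i j h, hd₀off j i (Ne.symm h), dist_comm]
  have hd₀pos : ∀ i j, i ≠ j → 0 < d₀ i j := by
    intro i j h
    rw [hd₀off i j h]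
    exact lt_of_lt_of_le hηpos (le_max_right _ _)
  have hd₀nonneg : ∀ i j, 0 ≤ d₀ i j := by
    intro i j
    by_cases h : i = j
    · subst h; rw [hd₀diag]
    · exact le_of_lt (hd₀pos i j h)
  have hd₀ultra : ∀ i j k : Fin n, d₀ i j ≤ max (d₀ i k) (d₀ k j) := by
    intro i j k
    by_cases hij : i = j
    · subst hij
      rw [hd₀diag]
      exact le_max_of_le_left (hd₀nonneg i k)
    · rw [hd₀off i j hij]
      by_cases hik : i = k
      · subst hik
        rw [hd₀diag, hd₀off i j hij]
        exact le_max_of_le_right le_rfl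
      · by_cases hkj : k = j
        · subst hkj
          rw [hd₀off i k hij, hd₀diag]
          exact le_max_of_le_left le_rfl
        · rw [hd₀off i k hik, hd₀off k j hkj]
          have h1 := hultra (π i) (π j) (π k)
          have h2 : dist (π i) (π k) ≤ max (dist (π i) (π k)) η := le_max_left _ _
          have h3 : dist (π k) (π j) ≤ max (dist (π k) (π j)) η := le_max_left _ _
          have h4 : η ≤ max (dist (π i) (π k)) η := le_max_right _ _
          apply max_le
          · calc dist (π i) (π j) ≤ max (dist (π i) (π k)) (dist (π k) (π j)) := h1
              _ ≤ max (max (dist (π i) (π k)) η) (max (dist (π k) (π j)) η) := max_le_max h2 h3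
          · exact le_max_of_le_left h4
  obtain ⟨d', hsymm', hdiag', hultra', hbound', hcount', havoid'⟩ :=
    splitAux n (Finset.univ : Finset (Fin n)) (by simp) d₀
      (fun x _ y _ => hd₀symm x y) (fun x _ => hd₀diag x)
      (fun x _ y _ h => hd₀pos x y h)
      (fun x _ y _ z _ => hd₀ultra x y z)
      (ε / 8) (by linarith) ∅ Set.finite_empty
  have hd'pos : ∀ i j : Fin n, i ≠ j → 0 < d' i j := by
    intro i j h
    have h1 := (hbound' i (Finset.mem_univ i) j (Finset.mem_univ j) h).1
    exact lt_of_lt_of_le (hd₀pos i j h) h1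
  have hd'nonneg : ∀ i j : Fin n, 0 ≤ d' i j := by
    intro i j
    by_cases h : i = j
    · subst h; rw [hdiag' i (Finset.mem_univ i)]
    · exact le_of_lt (hd'pos i j h)
  letI instX : MetricSpace (Fin n) :=
    { dist := d'
      dist_self := fun x => hdiag' x (Finset.mem_univ x)
      dist_comm := fun x y => hsymm' x (Finset.mem_univ x) y (Finset.mem_univ y)
      dist_triangle := fun x y z => by
        show d' x z ≤ d' x y + d' y z
        have h1 := hultra' x (Finset.mem_univ x) z (Finset.mem_univ z) y (Finset.mem_univ y)
        have h2 := hd'nonneg x y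
        have h3 := hd'nonneg y z
        rcases max_cases (d' x y) (d' y z) with ⟨hc, _⟩ | ⟨hc, _⟩ <;> rw [hc] at h1 <;> linarith
      eq_of_dist_eq_zero := by
        intro x y h
        by_contra hne
        exact absurd h (ne_of_gt (hd'pos x y hne)) }
  haveI hXne : Nonempty (Fin n) := ⟨⟨0, by omega⟩⟩
  refine ⟨Fin n, instX, Fin.fintype n, hXne, ?_, ?_, ?_, ?_⟩
  · intro x y z
    exact hultra' x (Finset.mem_univ x) y (Finset.mem_univ y) z (Finset.mem_univ z)
  · exact Fintype.card_fin n
  · have hseteq : {r : ℝ | ∃ x y : Fin n, x ≠ y ∧ dist x y = r} =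
        {r : ℝ | ∃ x ∈ (Finset.univ : Finset (Fin n)), ∃ y ∈ Finset.univ, x ≠ y ∧ d' x y = r} := by
      ext r
      constructor
      · rintro ⟨x, y, hxy, hr⟩
        exact ⟨x, Finset.mem_univ x, y, Finset.mem_univ y, hxy, hr⟩
      · rintro ⟨x, _, y, _, hxy, hr⟩
        exact ⟨x, y, hxy, hr⟩
    rw [hseteq, hcount']
  · have hgh : GromovHausdorff.ghDist (Fin n) Y ≤ 0 + (ε / 2) / 2 + 0 := by
      apply GromovHausdorff.ghDist_le_of_approx_subsets
        (s := (Set.univ : Set (Fin n))) (Φ := fun x => π x.val)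
      · intro x
        exact ⟨x, Set.mem_univ x, le_of_eq (dist_self x)⟩
      · intro y
        obtain ⟨i, hi⟩ := hπsurj y
        refine ⟨⟨i, Set.mem_univ i⟩, ?_⟩
        simp only [hi]
        exact le_of_eq (dist_self y)
      · intro x y
        rw [Subtype.dist_eq]
        have hd : dist x.val y.val = d' x.val y.val := rfl
        rw [hd]
        by_cases hxy : x.val = y.val
        · rw [hxy, hdiag' y.val (Finset.mem_univ _), dist_self]
          simp only [zero_sub, abs_neg, abs_zero]
          linarith
        · have h1 := hbound' x.val (Finset.mem_univ _) y.val (Finset.mem_univ _) hxy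
          rw [hd₀off x.val y.val hxy] at h1
          have h2 : dist (π x.val) (π y.val) ≤ max (dist (π x.val) (π y.val)) η :=
            le_max_left _ _
          have h3 : max (dist (π x.val) (π y.val)) η ≤ dist (π x.val) (π y.val) + η :=
            max_le (by linarith [dist_nonneg (x := π x.val) (y := π y.val)])
              (by linarith [dist_nonneg (x := π x.val) (y := π y.val)])
          rw [abs_le]
          exact ⟨by linarith [h1.1, h1.2], by linarith [h1.1, h1.2]⟩
    linarith
end
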